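/- arXiv:1210.1336 — 2 statements merged into one kernel-verified Lean document; each statement's English description precedes it below -/
import Mathlib

section
/- Let G be a finite simple graph that is r-partite (its vertex set is partitioned into r independent sets), unmixed, and perfect, and suppose every maximal clique of G has size r. Then G belongs to the class 𝒢, i.e., there exist α(G) cliques of G whose union of vertex sets is all of V(G). -/
/-- A set of vertices is independent if its elements are pairwise nonadjacent. -/
def SimpleGraph.IsIndepSet' {V : Type} (G : SimpleGraph V) (s : Set V) : Prop :=
  s.Pairwise fun u v => ¬ G.Adj u v

/-- `α(G)`: the maximum cardinality of an independent set of vertices of `G`. -/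
noncomputable def SimpleGraph.indepNum' {V : Type} (G : SimpleGraph V) : ℕ :=
  sSup {n | ∃ s : Finset V, G.IsIndepSet' ↑s ∧ s.card = n}

/-- `G` is `r`-partite: its vertex set is partitioned into `r` independent sets. -/
def SimpleGraph.IsRPartite {V : Type} (G : SimpleGraph V) (r : ℕ) : Prop :=
  ∃ P : Fin r → Set V, (∀ v, ∃! i, v ∈ P i) ∧ ∀ i, G.IsIndepSet' (P i)

/-- Every maximal clique of `G` has cardinality `r`. -/
def SimpleGraph.MaximalCliquesHaveCard {V : Type} (G : SimpleGraph V) (r : ℕ) : Prop :=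
  ∀ s : Finset V, G.IsClique ↑s → (∀ t : Finset V, G.IsClique ↑t → s ⊆ t → s = t) →
    s.card = r

/-- `G` belongs to the class `𝒢`: there are `α(G)` cliques covering all vertices of `G`. -/
def SimpleGraph.InClassG {V : Type} (G : SimpleGraph V) : Prop :=
  ∃ Q : Fin G.indepNum' → Finset V, (∀ i, G.IsClique ↑(Q i)) ∧ ∀ v, ∃ i, v ∈ Q i

/-- `A` is a vertex cover of `G`: it meets every edge. -/
def SimpleGraph.IsVertexCover' {V : Type} (G : SimpleGraph V) (A : Finset V) : Prop :=
  ∀ ⦃u v⦄, G.Adj u v → u ∈ A ∨ v ∈ A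

/-- `A` is a minimal vertex cover of `G`. -/
def SimpleGraph.IsMinimalVertexCover {V : Type} (G : SimpleGraph V) (A : Finset V) : Prop :=
  G.IsVertexCover' A ∧ ∀ B : Finset V, B ⊆ A → G.IsVertexCover' B → B = A

/-- `G` is unmixed: all minimal vertex covers have the same cardinality. -/
def SimpleGraph.Unmixed {V : Type} (G : SimpleGraph V) : Prop :=
  ∀ A B : Finset V, G.IsMinimalVertexCover A → G.IsMinimalVertexCover B → A.card = B.card

/-- `G` is perfect: for every induced subgraph, clique number equals chromatic number. -/
def SimpleGraph.IsPerfect {V : Type} (G : SimpleGraph V) : Prop :=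
  ∀ s : Set V, ((G.induce s).cliqueNum : ℕ∞) = (G.induce s).chromaticNumber

/-- `M` is a perfect `r`-matching of `G`: a set of pairwise disjoint cliques of size `r`
covering all vertices. -/
def SimpleGraph.IsPerfectRMatching {V : Type} (G : SimpleGraph V) (r : ℕ)
    (M : Finset (Finset V)) : Prop :=
  (∀ C ∈ M, G.IsNClique r C) ∧ (M : Set (Finset V)).Pairwise (fun C D => Disjoint C D) ∧
    ∀ v, ∃ C ∈ M, v ∈ C

/-- The depth of a commutative ring: the maximal length of a regular sequence. -/
noncomputable def ringDepth (R : Type) [CommRing R] : ℕ :=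
  sSup {n | ∃ rs : List R, rs.length = n ∧ RingTheory.Sequence.IsRegular R rs}

/-- The edge ideal of `G` over `K`, generated by `x_u x_v` for edges `{u,v}`. -/
noncomputable def SimpleGraph.edgeIdeal (K : Type) [Field K] {V : Type} (G : SimpleGraph V) :
    Ideal (MvPolynomial V K) :=
  Ideal.span {m | ∃ u v, G.Adj u v ∧ m = MvPolynomial.X u * MvPolynomial.X v}

/-- `G` is Cohen-Macaulay over `K`: the depth of the edge ring `S/I(G)` equals its
Krull dimension. -/
def SimpleGraph.IsCohenMacaulayOver (K : Type) [Field K] {V : Type}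
    (G : SimpleGraph V) : Prop :=
  (ringDepth (MvPolynomial V K ⧸ G.edgeIdeal K) : WithBot ℕ∞) =
    ringKrullDim (MvPolynomial V K ⧸ G.edgeIdeal K)

/-!
A perfect graph has a perfect complement (Lovász's weak perfect graph theorem, by Gasparian's
rank argument), so `V` can be properly coloured in `Gᶜ` with `ω(Gᶜ) = α(G)` colours,
and the colour classes are `α(G)` cliques of `G` covering `V`.

Gasparian: if `G[s]` is minimally imperfect with clique number `ω` and independence number `α`,
pick a maximum independent set `I`, for each `v ∈ I` an `ω`-colouring of `G[s - v]`, and take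
`I` together with the `αω` colour classes. Each of these `αω + 1` independent sets is missed by
some `ω`-clique, and that clique meets every other set of the family in exactly one vertex. So
`J - 1 = A * B` for the incidence matrices `A`, `B` of the two families, and `J - 1` is
invertible, whence `αω + 1 ≤ |s|`. Perfection of `G` gives `|s| ≤ αω` for every `s`, so no
induced subgraph of `Gᶜ` is minimally imperfect.
-/

open Finset

theorem Matrix.isUnit_ones_sub_one {ι K : Type*} [Fintype ι] [DecidableEq ι] [Field K]
    [CharZero K] (hι : 2 ≤ Fintype.card ι) :
    IsUnit (Matrix.of (fun _ _ => 1) - 1 : Matrix ι ι K) := by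
  set J : Matrix ι ι K := Matrix.of fun _ _ => 1
  set n : K := (Fintype.card ι : K)
  have hn : n - 1 ≠ 0 := by
    rw [← Nat.cast_one, ← Nat.cast_sub (by omega), Nat.cast_ne_zero]
    omega
  have hJJ : J * J = n • J := by ext; simp [J, n, Matrix.mul_apply]
  rw [Matrix.isUnit_iff_isUnit_det]
  refine Matrix.isUnit_det_of_right_inverse (B := (n - 1)⁻¹ • J - 1) ?_
  calc (J - 1) * ((n - 1)⁻¹ • J - 1) = ((n - 1)⁻¹ * (n - 1)) • J - J + 1 := by
        rw [sub_mul, mul_sub, mul_sub, Matrix.mul_smul, hJJ, smul_smul, mul_sub, sub_smul]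
        simp only [mul_one, one_mul]
        abel
    _ = 1 := by rw [inv_mul_cancel₀ hn, one_smul, sub_self, zero_add]

theorem Finset.card_le_of_card_inter_eq_ite {α ι : Type*} [DecidableEq α] [Fintype ι]
    [DecidableEq ι] {t : Finset α} {A K : ι → Finset α} (hK : ∀ j, K j ⊆ t)
    (hι : 2 ≤ Fintype.card ι) (h : ∀ i j, #(A i ∩ K j) = if i = j then 0 else 1) :
    Fintype.card ι ≤ #t := by
  let M : Matrix ι t ℚ := Matrix.of fun i v => if ↑v ∈ A i then 1 else 0
  let N : Matrix t ι ℚ := Matrix.of fun v j => if ↑v ∈ K j then 1 else 0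
  have hMN : M * N = Matrix.of (fun _ _ => 1) - 1 := by
    ext i j
    have hsub : A i ∩ K j ⊆ t := inter_subset_right.trans (hK j)
    calc (M * N) i j = #(A i ∩ K j) := by
          simp only [M, N, Matrix.mul_apply, Matrix.of_apply, ite_zero_mul_ite_zero, mul_one,
            ← mem_inter]
          rw [sum_coe_sort t (fun v => if v ∈ A i ∩ K j then (1 : ℚ) else 0), sum_boole,
            filter_mem_eq_inter, inter_eq_right.mpr hsub]
      _ = _ := by rw [h]; split_ifs <;> simp [*]
  calc Fintype.card ι = (M * N).rank := by
        rw [hMN, Matrix.rank_of_isUnit _ (Matrix.isUnit_ones_sub_one hι)]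
    _ ≤ M.rank := Matrix.rank_mul_le_left M N
    _ ≤ #t := (Matrix.rank_le_card_width M).trans_eq (Fintype.card_coe t)

namespace SimpleGraph

section ColoringOn

variable {V : Type*} (G : SimpleGraph V)

def IsColoringOn (s : Finset V) (m : ℕ) (c : V → ℕ) : Prop :=
  ∀ u ∈ s, c u < m ∧ ∀ w ∈ s, G.Adj u w → c u ≠ c w

def ColorableOn (s : Finset V) (m : ℕ) : Prop :=
  ∃ c, G.IsColoringOn s m c

noncomputable def cliqueNumOn (s : Finset V) : ℕ :=
  sSup {n | ∃ K ⊆ s, G.IsNClique n K}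

def IsMinimallyImperfectOn (s : Finset V) : Prop :=
  ¬ G.ColorableOn s (G.cliqueNumOn s) ∧ ∀ t ⊂ s, G.ColorableOn t (G.cliqueNumOn t)

variable {G} {s : Finset V} {m : ℕ} {c : V → ℕ}

theorem bddAbove_cliqueNumOn_set : BddAbove {n | ∃ K ⊆ s, G.IsNClique n K} :=
  ⟨#s, by rintro _ ⟨K, hKs, hK⟩; exact hK.card_eq ▸ card_le_card hKs⟩

theorem exists_isNClique_cliqueNumOn (G : SimpleGraph V) (s : Finset V) :
    ∃ K ⊆ s, G.IsNClique (G.cliqueNumOn s) K :=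
  Nat.sSup_mem (s := {n | ∃ K ⊆ s, G.IsNClique n K})
    ⟨0, ∅, empty_subset s, by simp [isNClique_iff]⟩ bddAbove_cliqueNumOn_set

theorem IsClique.card_le_cliqueNumOn {K : Finset V} (hK : G.IsClique K) (hKs : K ⊆ s) :
    #K ≤ G.cliqueNumOn s :=
  le_csSup bddAbove_cliqueNumOn_set ⟨K, hKs, hK, rfl⟩

theorem cliqueNumOn_mono {t : Finset V} (h : t ⊆ s) : G.cliqueNumOn t ≤ G.cliqueNumOn s := by
  obtain ⟨K, hKt, hK⟩ := G.exists_isNClique_cliqueNumOn t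
  exact hK.card_eq ▸ hK.isClique.card_le_cliqueNumOn (hKt.trans h)

theorem one_le_cliqueNumOn (hs : s.Nonempty) : 1 ≤ G.cliqueNumOn s := by
  obtain ⟨v, hv⟩ := hs
  simpa using (show G.IsClique ({v} : Finset V) by simp).card_le_cliqueNumOn
    (singleton_subset_iff.2 hv)

theorem card_inter_le_one_of_isClique_compl [DecidableEq V] {A K : Finset V}
    (hA : Gᶜ.IsClique A) (hK : G.IsClique K) : #(A ∩ K) ≤ 1 :=
  card_le_one.2 fun u hu w hw => by
    rw [mem_inter] at hu hw
    by_contra huw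
    exact (hA hu.1 hw.1 huw).2 (hK hu.2 hw.2 huw)

theorem card_le_of_disjoint_of_inter_nonempty [DecidableEq V] {ι : Type*} [Fintype ι]
    [DecidableEq ι] {A K : ι → Finset V} (hKs : ∀ j, K j ⊆ s) (hK : ∀ j, G.IsClique (K j))
    (hA : ∀ i, Gᶜ.IsClique (A i)) (hKA : ∀ i, Disjoint (K i) (A i))
    (hAK : ∀ i j, i ≠ j → (A i ∩ K j).Nonempty) (hι : 2 ≤ Fintype.card ι) :
    Fintype.card ι ≤ #s :=
  card_le_of_card_inter_eq_ite hKs hι fun i j => by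
    split_ifs with hij
    · subst hij
      exact card_eq_zero.2 (disjoint_iff_inter_eq_empty.1 (hKA i).symm)
    · exact le_antisymm (card_inter_le_one_of_isClique_compl (hA i) (hK j))
        (card_pos.2 (hAK i j hij))

theorem ColorableOn.mono (h : G.ColorableOn s m) {m' : ℕ} (hm : m ≤ m') :
    G.ColorableOn s m' :=
  let ⟨c, hc⟩ := h
  ⟨c, fun u hu => ⟨(hc u hu).1.trans_le hm, (hc u hu).2⟩⟩

theorem IsColoringOn.isClique_compl_filter (hc : G.IsColoringOn s m c) (j : ℕ) :
    Gᶜ.IsClique (s.filter (c · = j) : Set V) := by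
  intro u hu w hw huw
  rw [coe_filter] at hu hw
  exact ⟨huw, fun hadj => (hc u hu.1).2 w hw.1 hadj (hu.2.trans hw.2.symm)⟩

/-- `K` uses `#K` distinct colours, none of them in `S`. -/
theorem IsColoringOn.card_add_card_le (hc : G.IsColoringOn s m c) {K : Finset V}
    (hKs : K ⊆ s) (hK : G.IsClique K) {S : Finset ℕ} (hS : S ⊆ range m)
    (hKS : ∀ u ∈ K, c u ∉ S) : #K + #S ≤ m := by
  have hinj : Set.InjOn c K := fun u hu w hw hcuw => by
    by_contra huw
    exact (hc u (hKs hu)).2 w (hKs hw) (hK hu hw huw) hcuw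
  have hdisj : Disjoint (K.image c) S := Finset.disjoint_left.2 fun x hx hxS => by
    obtain ⟨u, hu, rfl⟩ := mem_image.1 hx
    exact hKS u hu hxS
  have hsub : K.image c ∪ S ⊆ range m := union_subset
    (fun x hx => by obtain ⟨u, hu, rfl⟩ := mem_image.1 hx; exact mem_range.2 (hc u (hKs hu)).1) hS
  simpa [card_union_of_disjoint hdisj, card_image_of_injOn hinj] using card_le_card hsub

theorem IsColoringOn.colorableOn_pred {j : ℕ} (hc : G.IsColoringOn s m c) (hj : j < m)
    (hunused : ∀ u ∈ s, c u ≠ j) : G.ColorableOn s (m - 1) := by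
  refine ⟨fun u => if j < c u then c u - 1 else c u, fun u hu => ⟨?_, fun w hw hadj => ?_⟩⟩
  · have h₁ := (hc u hu).1
    have h₂ := hunused u hu
    dsimp only
    split_ifs <;> omega
  · have h₁ := (hc u hu).2 w hw hadj
    have h₂ := hunused u hu
    have h₃ := hunused w hw
    dsimp only
    split_ifs <;> omega

theorem ColorableOn.of_sdiff [DecidableEq V] {A : Finset V} (h : G.ColorableOn (s \ A) m)
    (hA : Gᶜ.IsClique A) : G.ColorableOn s (m + 1) := by
  obtain ⟨c, hc⟩ := h
  refine ⟨fun u => if u ∈ A then m else c u, fun u hu => ⟨?_, fun w hw hadj => ?_⟩⟩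
  · dsimp only
    split_ifs with huA
    · exact m.lt_succ_self
    · exact (hc u (mem_sdiff.2 ⟨hu, huA⟩)).1.trans m.lt_succ_self
  · by_cases huA : u ∈ A <;> by_cases hwA : w ∈ A <;> simp only [huA, hwA, if_true, if_false]
    · exact absurd hadj (hA huA hwA (G.ne_of_adj hadj)).2
    · exact ((hc w (mem_sdiff.2 ⟨hw, hwA⟩)).1).ne'
    · exact ((hc u (mem_sdiff.2 ⟨hu, huA⟩)).1).ne
    · exact (hc u (mem_sdiff.2 ⟨hu, huA⟩)).2 w (mem_sdiff.2 ⟨hw, hwA⟩) hadj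

theorem ColorableOn.card_le_mul (h : G.ColorableOn s m) : #s ≤ m * Gᶜ.cliqueNumOn s := by
  obtain ⟨c, hc⟩ := h
  calc #s = ∑ j ∈ range m, #(s.filter (c · = j)) :=
        card_eq_sum_card_fiberwise fun u hu => mem_range.2 (hc u hu).1
    _ ≤ ∑ _j ∈ range m, Gᶜ.cliqueNumOn s :=
        sum_le_sum fun j _ => (hc.isClique_compl_filter j).card_le_cliqueNumOn (filter_subset _ s)
    _ = m * Gᶜ.cliqueNumOn s := by rw [sum_const, card_range, smul_eq_mul]

theorem IsColoringOn.filter_inter_nonempty_of_notMem [DecidableEq V] {v : V} {K : Finset V}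
    (hc : G.IsColoringOn (s.erase v) m c) (hKs : K ⊆ s) (hK : G.IsNClique m K) (hvK : v ∉ K)
    {j : ℕ} (hj : j < m) : ((s.erase v).filter (c · = j) ∩ K).Nonempty := by
  by_contra hempty
  have hKs' : K ⊆ s.erase v := fun u hu => mem_erase.2 ⟨ne_of_mem_of_not_mem hu hvK, hKs hu⟩
  have := hc.card_add_card_le hKs' hK.isClique (singleton_subset_iff.2 (mem_range.2 hj))
    fun u hu hcu => hempty ⟨u, mem_inter.2 ⟨mem_filter.2 ⟨hKs' hu, mem_singleton.1 hcu⟩, hu⟩⟩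
  rw [hK.card_eq, card_singleton] at this
  omega

theorem IsColoringOn.mem_of_disjoint_filter [DecidableEq V] {v : V} {K : Finset V}
    (hc : G.IsColoringOn (s.erase v) m c) (hKs : K ⊆ s) (hK : G.IsNClique m K) {j : ℕ}
    (hj : j < m) (hdisj : Disjoint K ((s.erase v).filter (c · = j))) : v ∈ K := by
  by_contra hvK
  obtain ⟨u, hu⟩ := hc.filter_inter_nonempty_of_notMem hKs hK hvK hj
  exact Finset.disjoint_right.1 hdisj (mem_inter.1 hu).1 (mem_inter.1 hu).2

theorem IsColoringOn.filter_inter_nonempty_of_mem [DecidableEq V] {v : V} {K : Finset V}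
    (hc : G.IsColoringOn (s.erase v) m c) (hKs : K ⊆ s) (hK : G.IsNClique m K) (hvK : v ∈ K)
    {j j' : ℕ} (hj : j < m) (hj' : j' < m) (hjj' : j ≠ j')
    (hdisj : Disjoint K ((s.erase v).filter (c · = j))) :
    ((s.erase v).filter (c · = j') ∩ K).Nonempty := by
  by_contra hempty
  have hKs' : K.erase v ⊆ s.erase v := erase_subset_erase v hKs
  have := hc.card_add_card_le hKs' (hK.isClique.subset (coe_subset.2 (erase_subset v K)))
    (S := {j, j'}) (by simp [insert_subset_iff, hj, hj']) fun u hu hcu => by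
      rcases mem_insert.1 hcu with hcu | hcu
      · exact Finset.disjoint_left.1 hdisj (mem_of_mem_erase hu) (mem_filter.2 ⟨hKs' hu, hcu⟩)
      · exact hempty ⟨u, mem_inter.2
          ⟨mem_filter.2 ⟨hKs' hu, mem_singleton.1 hcu⟩, mem_of_mem_erase hu⟩⟩
  rw [card_erase_of_mem hvK, hK.card_eq, card_pair hjj'] at this
  omega

end ColoringOn

section MinimallyImperfect

variable {V : Type*} {G : SimpleGraph V} {s : Finset V}

namespace IsMinimallyImperfectOn

theorem nonempty (h : G.IsMinimallyImperfectOn s) : s.Nonempty := by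
  rw [nonempty_iff_ne_empty]
  rintro rfl
  exact h.1 ⟨fun _ => 0, by simp [IsColoringOn]⟩

theorem exists_isColoringOn_erase [DecidableEq V] (h : G.IsMinimallyImperfectOn s) {v : V}
    (hv : v ∈ s) :
    ∃ c, G.IsColoringOn (s.erase v) (G.cliqueNumOn s) c :=
  (h.2 _ (erase_ssubset hv)).mono (cliqueNumOn_mono (erase_subset v s))

/-- Removing a nonempty independent set leaves a clique of maximum size: otherwise the rest
could be coloured with `ω - 1` colours and the independent set would take the last one. -/
theorem exists_isNClique_disjoint [DecidableEq V] (h : G.IsMinimallyImperfectOn s)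
    {A : Finset V} (hAs : A ⊆ s) (hA : Gᶜ.IsClique A) (hA₀ : A.Nonempty) :
    ∃ K ⊆ s, G.IsNClique (G.cliqueNumOn s) K ∧ Disjoint K A := by
  have hω := one_le_cliqueNumOn (G := G) h.nonempty
  have hle : G.cliqueNumOn s ≤ G.cliqueNumOn (s \ A) := by
    by_contra! hlt
    have := ((h.2 _ (sdiff_ssubset hAs hA₀)).mono (Nat.le_pred_of_lt hlt)).of_sdiff hA
    exact h.1 (Nat.sub_add_cancel hω ▸ this)
  obtain ⟨K₀, hK₀s, hK₀⟩ := G.exists_isNClique_cliqueNumOn (s \ A)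
  obtain ⟨K, hKK₀, hK⟩ := exists_subset_card_eq (hK₀.card_eq ▸ hle)
  refine ⟨K, hKK₀.trans (hK₀s.trans sdiff_subset),
    ⟨hK₀.isClique.subset (coe_subset.2 hKK₀), hK⟩, ?_⟩
  exact disjoint_of_subset_left (hKK₀.trans hK₀s) sdiff_disjoint

theorem filter_nonempty [DecidableEq V] (h : G.IsMinimallyImperfectOn s) {v : V} {c : V → ℕ}
    (hc : G.IsColoringOn (s.erase v) (G.cliqueNumOn s) c) {j : ℕ} (hj : j < G.cliqueNumOn s) :
    ((s.erase v).filter (c · = j)).Nonempty := by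
  by_contra hempty
  have hω := one_le_cliqueNumOn (G := G) h.nonempty
  have hcol := hc.colorableOn_pred hj fun u hu hcu => hempty ⟨u, mem_filter.2 ⟨hu, hcu⟩⟩
  rw [erase_eq] at hcol
  have := hcol.of_sdiff (by simp)
  exact h.1 (Nat.sub_add_cancel hω ▸ this)

theorem mul_add_one_le_card (h : G.IsMinimallyImperfectOn s) :
    Gᶜ.cliqueNumOn s * G.cliqueNumOn s + 1 ≤ #s := by
  classical
  set ω := G.cliqueNumOn s
  obtain ⟨I, hIs, hI⟩ := Gᶜ.exists_isNClique_cliqueNumOn s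
  choose c hc using fun v : I => h.exists_isColoringOn_erase (hIs v.2)
  let A : Option (I × Fin ω) → Finset V
    | none => I
    | some (v, k) => (s.erase v).filter (c v · = k)
  have hAs : ∀ i, A i ⊆ s
    | none => hIs
    | some (v, k) => (filter_subset _ _).trans (erase_subset _ _)
  have hA : ∀ i, Gᶜ.IsClique (A i)
    | none => hI.isClique
    | some (v, k) => (hc v).isClique_compl_filter k
  have hA₀ : ∀ i, (A i).Nonempty
    | none => by
      rw [← card_pos, hI.card_eq]
      exact one_le_cliqueNumOn h.nonempty
    | some (v, k) => h.filter_nonempty (hc v) k.2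
  choose K hKs hK hKA using fun i => h.exists_isNClique_disjoint (hAs i) (hA i) (hA₀ i)
  have hmeet_of_notMem (u : I) (k : Fin ω) j (hu : (u : V) ∉ K j) :
      (A (some (u, k)) ∩ K j).Nonempty :=
    (hc u).filter_inter_nonempty_of_notMem (hKs j) (hK j) hu k.2
  have hmeet : ∀ i j, i ≠ j → (A i ∩ K j).Nonempty := by
    rintro i (_ | ⟨v, k⟩) hij
    · obtain _ | ⟨u, k'⟩ := i
      · exact absurd rfl hij
      · exact hmeet_of_notMem u k' none fun hu => Finset.disjoint_left.1 (hKA none) hu u.2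
    · have hvK := (hc v).mem_of_disjoint_filter (hKs _) (hK _) k.2 (hKA (some (v, k)))
      obtain _ | ⟨u, k'⟩ := i
      · exact ⟨v, mem_inter.2 ⟨v.2, hvK⟩⟩
      by_cases huv : u = v
      · subst huv
        exact (hc u).filter_inter_nonempty_of_mem (hKs _) (hK _) hvK k.2 k'.2
          (fun hkk' => hij (by rw [Fin.ext hkk'])) (hKA _)
      · refine hmeet_of_notMem u k' _ fun hu => huv (Subtype.ext ?_)
        exact card_le_one.1 (card_inter_le_one_of_isClique_compl hI.isClique (hK _).isClique)
          u (mem_inter.2 ⟨u.2, hu⟩) v (mem_inter.2 ⟨v.2, hvK⟩)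
  have hcard : Fintype.card (Option (I × Fin ω)) = #I * ω + 1 := by simp [hI.card_eq]
  have hω := one_le_cliqueNumOn (G := G) h.nonempty
  have hI₀ : 1 ≤ #I := card_pos.2 (hA₀ none)
  have := card_le_of_disjoint_of_inter_nonempty hKs (fun j => (hK j).isClique) hA hKA hmeet
    (by rw [hcard]; nlinarith)
  rwa [hcard, hI.card_eq] at this

end IsMinimallyImperfectOn

end MinimallyImperfect

section Perfect

variable {V : Type} {G : SimpleGraph V}

theorem IsPerfect.colorableOn (hG : G.IsPerfect) (s : Finset V) :
    G.ColorableOn s (G.cliqueNumOn s) := by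
  classical
  obtain ⟨C⟩ := chromaticNumber_le_iff_colorable.1 (hG s).ge
  obtain ⟨K, hK⟩ := (G.induce (s : Set V)).exists_isNClique_cliqueNum
  rw [isNClique_induce_iff] at hK
  have hle := hK.card_eq ▸ hK.isClique.card_le_cliqueNumOn (coe_subset.1 (map_subtype_subset K))
  refine ⟨fun v => if hv : v ∈ s then C ⟨v, hv⟩ else 0, fun u hu => ⟨?_, fun w hw hadj => ?_⟩⟩
  · simpa [hu] using (C ⟨u, hu⟩).2.trans_le hle
  · simpa [hu, hw, Fin.val_inj] using C.valid (v := ⟨u, hu⟩) (w := ⟨w, hw⟩) hadj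

theorem IsPerfect.compl_colorableOn (hG : G.IsPerfect) (s : Finset V) :
    Gᶜ.ColorableOn s (Gᶜ.cliqueNumOn s) := by
  induction s using Finset.strongInduction with
  | H s ih =>
    by_contra hs
    have hgasparian := IsMinimallyImperfectOn.mul_add_one_le_card ⟨hs, ih⟩
    have hperfect := (hG.colorableOn s).card_le_mul
    rw [compl_compl] at hgasparian
    omega

theorem cliqueNumOn_compl_univ [Fintype V] : Gᶜ.cliqueNumOn univ = G.indepNum' := by
  simp [cliqueNumOn, indepNum', isNClique_iff, IsIndepSet']

end Perfect

end SimpleGraph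

theorem rpartite_unmixed_perfect_mem_classG_general {V : Type} [Fintype V] (G : SimpleGraph V)
    (hperfect : G.IsPerfect) :
    G.InClassG := by
  obtain ⟨c, hc⟩ := hperfect.compl_colorableOn univ
  rw [SimpleGraph.cliqueNumOn_compl_univ] at hc
  refine ⟨fun i => univ.filter (c · = i), fun i => ?_, fun v => ⟨⟨c v, (hc v (mem_univ v)).1⟩, ?_⟩⟩
  · simpa using hc.isClique_compl_filter i
  · simp

/-- If a finite simple graph `G` is `r`-partite, unmixed, and perfect, and every maximal
clique of `G` has size `r`, then `G` belongs to the class `𝒢`. -/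
theorem rpartite_unmixed_perfect_mem_classG {V : Type} [Fintype V] (G : SimpleGraph V)
    (r : ℕ) (hpart : G.IsRPartite r) (hunmixed : G.Unmixed) (hperfect : G.IsPerfect)
    (hmax : G.MaximalCliquesHaveCard r) :
    G.InClassG :=
  rpartite_unmixed_perfect_mem_classG_general G hperfect
end

section
/- Let G be a finite simple r-partite graph that is unmixed, such that every maximal clique of G has size r, and such that G belongs to the class 𝒢. Then G has a perfect r-matching, i.e., V(G) can be partitioned into pairwise disjoint cliques each of size exactly r. -/
/-!
Each colour class of the `r`-partition is a maximal independent set: a vertex outside it lies in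
a maximal clique, which has `r` vertices of pairwise distinct colours and so meets the class.
Complements of maximal independent sets are minimal vertex covers, so by unmixedness every
colour class has `α(G)` vertices and `|V| = r α(G)`. Enlarging the `α(G)` covering cliques to
maximal cliques gives cliques of size `r` covering `V` whose sizes add up to `|V|`, so they are
pairwise disjoint.
-/

open Finset Function

lemma Finset.pairwise_disjoint_of_sum_card_le_card {ι α : Type*} [Fintype ι] [Fintype α]
    (C : ι → Finset α) (hcover : ∀ a, ∃ i, a ∈ C i) (hsum : ∑ i, #(C i) ≤ Fintype.card α) :
    Pairwise (Disjoint on C) := by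
  classical
  intro i j hij
  rw [onFun, Finset.disjoint_left]
  intro x hxi hxj
  have hcount : ∑ i, #(C i) = ∑ a, #{i | a ∈ C i} := by
    simpa [bipartiteAbove, bipartiteBelow, Finset.filter_mem_eq_inter] using
      sum_card_bipartiteAbove_eq_sum_card_bipartiteBelow (s := univ) (t := univ)
        (fun i a => a ∈ C i)
  have hlt : ∑ _a : α, 1 < ∑ a, #{i | a ∈ C i} :=
    sum_lt_sum (fun a _ => card_pos.2 <| (hcover a).imp fun i hi => by simpa using hi)
      ⟨x, mem_univ x, one_lt_card.2 ⟨i, by simpa using hxi, j, by simpa using hxj, hij⟩⟩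
  simp only [sum_const, card_univ, smul_eq_mul, mul_one] at hlt
  omega

namespace SimpleGraph

variable {V : Type} (G : SimpleGraph V)

def IsMaximalIndepSet' (A : Finset V) : Prop :=
  G.IsIndepSet' ↑A ∧ ∀ v ∉ A, ∃ w ∈ A, G.Adj v w

variable {G}

lemma IsMaximalIndepSet'.isMinimalVertexCover_compl [Fintype V] [DecidableEq V] {A : Finset V}
    (hA : G.IsMaximalIndepSet' A) : G.IsMinimalVertexCover Aᶜ := by
  refine ⟨fun u v huv => ?_, fun B hB hBcover => Subset.antisymm hB fun x hx => ?_⟩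
  · by_contra! h
    simp only [mem_compl, not_not] at h
    exact hA.1 h.1 h.2 huv.ne huv
  · by_contra hxB
    obtain ⟨w, hwA, hxw⟩ := hA.2 x (mem_compl.1 hx)
    exact (hBcover hxw).elim hxB fun hwB => mem_compl.1 (hB hwB) hwA

lemma Unmixed.card_eq_of_isMaximalIndepSet' [Fintype V] (hG : G.Unmixed) {A B : Finset V}
    (hA : G.IsMaximalIndepSet' A) (hB : G.IsMaximalIndepSet' B) : #A = #B := by
  classical
  have := hG _ _ hA.isMinimalVertexCover_compl hB.isMinimalVertexCover_compl
  rw [card_compl, card_compl] at this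
  have := card_le_univ A
  have := card_le_univ B
  omega

lemma bddAbove_card_isIndepSet' [Fintype V] :
    BddAbove {n | ∃ s : Finset V, G.IsIndepSet' ↑s ∧ #s = n} :=
  ⟨Fintype.card V, fun _ ⟨s, _, hs⟩ => hs ▸ card_le_univ s⟩

lemma IsIndepSet'.card_le_indepNum' [Fintype V] {s : Finset V} (hs : G.IsIndepSet' ↑s) :
    #s ≤ G.indepNum' :=
  le_csSup bddAbove_card_isIndepSet' ⟨s, hs, rfl⟩

lemma exists_isIndepSet'_card_eq_indepNum' [Fintype V] :
    ∃ s : Finset V, G.IsIndepSet' ↑s ∧ #s = G.indepNum' :=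
  Nat.sSup_mem (s := {n | ∃ s : Finset V, G.IsIndepSet' ↑s ∧ #s = n})
    ⟨0, ∅, by simp [IsIndepSet']⟩ bddAbove_card_isIndepSet'

lemma exists_isMaximalIndepSet'_card_eq_indepNum' [Fintype V] :
    ∃ s : Finset V, G.IsMaximalIndepSet' s ∧ #s = G.indepNum' := by
  classical
  obtain ⟨s, hs, hcard⟩ := G.exists_isIndepSet'_card_eq_indepNum'
  refine ⟨s, ⟨hs, fun v hv => ?_⟩, hcard⟩
  by_contra! h
  have hins : G.IsIndepSet' ↑(insert v s) := by
    rw [coe_insert, IsIndepSet', Set.pairwise_insert]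
    exact ⟨hs, fun w hw _ => ⟨h w hw, fun hwv => h w hw hwv.symm⟩⟩
  have := hins.card_le_indepNum'
  rw [card_insert_of_notMem hv] at this
  omega

lemma Unmixed.card_eq_indepNum' [Fintype V] (hG : G.Unmixed) {A : Finset V}
    (hA : G.IsMaximalIndepSet' A) : #A = G.indepNum' := by
  obtain ⟨s, hs, hcard⟩ := G.exists_isMaximalIndepSet'_card_eq_indepNum'
  exact hcard ▸ hG.card_eq_of_isMaximalIndepSet' hA hs

lemma exists_maximal_clique_superset [Finite V] {s : Finset V} (hs : G.IsClique ↑s) :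
    ∃ t : Finset V, s ⊆ t ∧ G.IsClique ↑t ∧
      ∀ u : Finset V, G.IsClique ↑u → t ⊆ u → t = u := by
  obtain ⟨t, hst, ht⟩ := Finite.exists_le_maximal (p := fun t : Finset V => G.IsClique ↑t) hs
  exact ⟨t, hst, ht.1, fun u hu htu => Subset.antisymm htu (ht.2 hu htu)⟩

lemma IsRPartite.nonempty_coloring {r : ℕ} (hG : G.IsRPartite r) :
    Nonempty (G.Coloring (Fin r)) := by
  obtain ⟨P, hmem, hindep⟩ := hG
  choose part hpart _ using hmem
  refine ⟨Coloring.mk part fun {u v} huv heq => ?_⟩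
  exact hindep (part u) (hpart u) (heq ▸ hpart v) huv.ne huv

lemma isPerfectRMatching_image {r : ℕ} {ι : Type*} [Fintype ι] [DecidableEq V]
    (K : ι → Finset V) (hK : ∀ i, G.IsNClique r ↑(K i)) (hdisj : Pairwise (Disjoint on K))
    (hcover : ∀ v, ∃ i, v ∈ K i) : G.IsPerfectRMatching r (univ.image K) := by
  refine ⟨?_, ?_, fun v => ?_⟩
  · simpa using hK
  · rw [coe_image, coe_univ, Set.image_univ]
    rintro _ ⟨i, rfl⟩ _ ⟨j, rfl⟩ hne
    exact hdisj (ne_of_apply_ne K hne)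
  · obtain ⟨i, hi⟩ := hcover v
    exact ⟨K i, mem_image_of_mem K (mem_univ i), hi⟩

lemma Coloring.exists_adj_of_ne [Finite V] {r : ℕ} (hmax : G.MaximalCliquesHaveCard r)
    (C : G.Coloring (Fin r)) {v : V} {a : Fin r} (hv : C v ≠ a) : ∃ w, C w = a ∧ G.Adj v w := by
  obtain ⟨t, hvt, ht, htmax⟩ := G.exists_maximal_clique_superset (s := {v}) (by simp)
  have hvt : v ∈ t := hvt (mem_singleton_self v)
  obtain ⟨w, hwt, hw⟩ :=
    C.surjOn_of_card_le_isClique ht (by simp [hmax t ht htmax]) (Set.mem_univ a)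
  exact ⟨w, hw, ht hvt hwt fun hvw => hv (hvw ▸ hw)⟩

variable [Fintype V] {r : ℕ}

lemma Coloring.isMaximalIndepSet'_filter (hmax : G.MaximalCliquesHaveCard r)
    (C : G.Coloring (Fin r)) (a : Fin r) : G.IsMaximalIndepSet' {v | C v = a} := by
  refine ⟨fun u hu v hv _ huv => ?_, fun v hv => ?_⟩
  · simp only [coe_filter, mem_univ, true_and, Set.mem_ofPred_eq] at hu hv
    exact C.valid huv (hu.trans hv.symm)
  · obtain ⟨w, hw, hvw⟩ := C.exists_adj_of_ne hmax (by simpa using hv)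
    exact ⟨w, by simpa using hw, hvw⟩

lemma Coloring.card_eq_mul_indepNum' (hunmixed : G.Unmixed) (hmax : G.MaximalCliquesHaveCard r)
    (C : G.Coloring (Fin r)) : Fintype.card V = r * G.indepNum' := by
  classical
  calc Fintype.card V = ∑ a : Fin r, #{v | C v = a} :=
        card_eq_sum_card_fiberwise (fun v _ => mem_univ (C v))
    _ = r * G.indepNum' := by
        simp [hunmixed.card_eq_indepNum' (C.isMaximalIndepSet'_filter hmax _)]

end SimpleGraph

/-- If `G` is an `r`-partite unmixed graph in the class `𝒢` such that every maximal
clique of `G` has size `r`, then `G` has a perfect `r`-matching. -/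
theorem exists_perfect_matching {V : Type} [Fintype V] (G : SimpleGraph V) (r : ℕ)
    (hpart : G.IsRPartite r) (hunmixed : G.Unmixed) (hmax : G.MaximalCliquesHaveCard r)
    (hG : G.InClassG) :
    ∃ M : Finset (Finset V), G.IsPerfectRMatching r M := by
  classical
  obtain ⟨C⟩ := hpart.nonempty_coloring
  obtain ⟨Q, hQ, hQcover⟩ := hG
  choose K hQK hK hKmax using fun i => G.exists_maximal_clique_superset (hQ i)
  have hKcard : ∀ i, #(K i) = r := fun i => hmax _ (hK i) (hKmax i)
  have hKcover : ∀ v, ∃ i, v ∈ K i := fun v => (hQcover v).imp fun i hv => hQK i hv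
  have hdisj : Pairwise (Disjoint on K) :=
    Finset.pairwise_disjoint_of_sum_card_le_card K hKcover
      (by simp [hKcard, C.card_eq_mul_indepNum' hunmixed hmax, mul_comm])
  exact ⟨_, G.isPerfectRMatching_image K (fun i => ⟨hK i, hKcard i⟩) hdisj hKcover⟩
end
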